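/- arXiv:1309.0316 — 3 statements merged into one kernel-verified Lean document; each statement's English description precedes it below -/
import Mathlib

section
/- Let N ≥ 1 and let μ be a probability mass function on the additive group G = (Fin N → ZMod 2) whose support is not contained in any coset of a proper additive subgroup of G. Define the sequence μ_0 = μ and μ_{j+1} = the distribution of X + Y where X and Y are independent with distribution μ_j (so μ_j is the degree-preserving recombination of μ with itself iterated j times). Then for every g ∈ G, μ_j(g) converges to 2^{−N} as j → ∞; consequently, for every 0 ≤ i ≤ N the probability under μ_j that the Hamming weight equals i converges to C(N, i)/2^N (the Binomial distribution B(N, 1/2)), and the expected Hamming weight under μ_j converges to N/2. -/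
open scoped ENNReal

/-- Degree (Hamming weight) of a binary vector: the number of coordinates equal to `1`. -/
def degree {N : ℕ} (g : Fin N → ZMod 2) : ℕ :=
  (Finset.univ.filter fun i => g i = 1).card

/-- Distribution of `X + Y` for `X ~ μ` and `Y ~ ν` independent (convolution). -/
noncomputable def conv {G : Type*} [AddGroup G] (μ ν : PMF G) : PMF G :=
  μ.bind fun x => ν.map fun y => x + y

/-- `iterConv μ j` is the degree distribution after `j` recombination rounds:
`iterConv μ 0 = μ` and `iterConv μ (j+1)` is the distribution of `X + Y` with
`X, Y` independent, both distributed as `iterConv μ j`. -/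
noncomputable def iterConv {G : Type*} [AddGroup G] (μ : PMF G) : ℕ → PMF G
  | 0 => μ
  | j + 1 => conv (iterConv μ j) (iterConv μ j)

/-! Characters diagonalise convolution: the coefficient `∑ x, μ x • ψ x` of `iterConv μ j` at a
character `ψ` is the `2 ^ j`-th power of that of `μ`. By strict convexity of the unit disc this
coefficient has modulus `< 1` unless `ψ` is constant on the support of `μ`, i.e. unless the support
lies in a coset of `ker ψ`, which is proper for `ψ ≠ 0`. So all nontrivial coefficients tend to `0`
and Fourier inversion yields convergence to the uniform distribution. The Hamming-weight statements
follow by summing the uniform mass over the `N.choose i` vectors of weight `i`. -/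

open Filter Topology

section Fourier

variable {G : Type*}

lemma conv_apply [AddGroup G] (μ ν : PMF G) (g : G) :
    conv μ ν g = ∑' x, μ x * ν (-x + g) := by
  simp only [conv, PMF.bind_apply, PMF.map_apply]
  refine tsum_congr fun x => congrArg (μ x * ·) ?_
  rw [tsum_eq_single (-x + g) fun y hy => if_neg fun h => hy (by rw [h, neg_add_cancel_left]),
    if_pos (add_neg_cancel_left x g).symm]

lemma PMF.sum_toReal [Fintype G] (μ : PMF G) : ∑ x, (μ x).toReal = 1 := by
  have h := μ.tsum_coe
  rw [tsum_fintype] at h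
  rw [← ENNReal.toReal_sum fun x _ => μ.apply_ne_top x, h, ENNReal.toReal_one]

lemma toReal_conv_apply [AddGroup G] [Fintype G] (μ ν : PMF G) (g : G) :
    (conv μ ν g).toReal = ∑ x, (μ x).toReal * (ν (-x + g)).toReal := by
  rw [conv_apply, tsum_fintype, ENNReal.toReal_sum fun x _ =>
    ENNReal.mul_ne_top (μ.apply_ne_top x) (ν.apply_ne_top _)]
  simp only [ENNReal.toReal_mul]

namespace PMF

variable [Fintype G]

noncomputable def charFun [AddMonoid G] (μ : PMF G) (ψ : AddChar G ℂ) : ℂ :=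
  ∑ x, (μ x).toReal • ψ x

lemma charFun_zero [AddMonoid G] (μ : PMF G) : μ.charFun 0 = 1 := by
  simp [charFun, ← Complex.ofReal_sum, μ.sum_toReal]

lemma charFun_conv [AddGroup G] (μ ν : PMF G) (ψ : AddChar G ℂ) :
    (conv μ ν).charFun ψ = μ.charFun ψ * ν.charFun ψ := by
  simp only [charFun, toReal_conv_apply, Finset.sum_smul, Finset.sum_mul_sum]
  rw [Finset.sum_comm]
  refine Finset.sum_congr rfl fun x _ => ?_
  rw [← Equiv.sum_comp (Equiv.addLeft x)]
  refine Finset.sum_congr rfl fun y _ => ?_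
  simp only [Equiv.coe_addLeft, neg_add_cancel_left, AddChar.map_add_eq_mul, Complex.real_smul]
  push_cast
  ring

lemma charFun_iterConv [AddGroup G] (μ : PMF G) (ψ : AddChar G ℂ) (j : ℕ) :
    (iterConv μ j).charFun ψ = μ.charFun ψ ^ 2 ^ j := by
  induction j with
  | zero => rw [pow_zero, pow_one]; rfl
  | succ j ih => rw [iterConv, charFun_conv, ih, pow_succ, pow_mul, sq]

lemma toReal_apply_eq_sum_charFun [AddCommGroup G] (μ : PMF G) (g : G) :
    ((μ g).toReal : ℂ) = (Fintype.card G : ℂ)⁻¹ * ∑ ψ : AddChar G ℂ, μ.charFun ψ * ψ (-g) := by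
  classical
  simp only [charFun, Finset.sum_mul, Complex.real_smul, mul_assoc, ← AddChar.map_add_eq_mul]
  rw [Finset.sum_comm]
  simp only [← Finset.mul_sum, AddChar.sum_apply_eq_ite, ← sub_eq_add_neg, sub_eq_zero, mul_ite,
    mul_zero, Finset.sum_ite_eq', Finset.mem_univ, if_true]
  rw [mul_left_comm, inv_mul_cancel₀ (by exact_mod_cast Fintype.card_ne_zero), mul_one]

lemma norm_charFun_lt_one_of_apply_ne [AddLeftCancelMonoid G] (μ : PMF G) (ψ : AddChar G ℂ)
    {x y : G} (hx : x ∈ μ.support) (hy : y ∈ μ.support) (hxy : ψ x ≠ ψ y) : ‖μ.charFun ψ‖ < 1 :=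
  norm_sum_lt_of_strictConvexSpace (fun _ _ => ENNReal.toReal_nonneg) μ.sum_toReal
    (Finset.mem_univ x) (Finset.mem_univ y) hxy
    (ENNReal.toReal_ne_zero.2 ⟨(μ.mem_support_iff x).1 hx, μ.apply_ne_top x⟩)
    (ENNReal.toReal_ne_zero.2 ⟨(μ.mem_support_iff y).1 hy, μ.apply_ne_top y⟩)
    fun z _ => (AddChar.norm_apply ψ z).le

lemma norm_charFun_lt_one [AddCommGroup G] (μ : PMF G)
    (hμ : ¬ ∃ (H : AddSubgroup G) (g : G), H ≠ ⊤ ∧ μ.support ⊆ {x | ∃ h ∈ H, x = g + h})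
    {ψ : AddChar G ℂ} (hψ : ψ ≠ 0) : ‖μ.charFun ψ‖ < 1 := by
  obtain ⟨x₀, hx₀⟩ := μ.support_nonempty
  by_contra hle
  refine hμ ⟨ψ.toAddMonoidHom.ker, x₀, ?_, fun x hx => ⟨x - x₀, ?_, by abel⟩⟩
  · obtain ⟨a, ha⟩ := AddChar.ne_zero_iff.1 hψ
    exact fun htop => ha (by simpa using (AddSubgroup.eq_top_iff' _).1 htop a)
  · by_contra hker
    refine hle (μ.norm_charFun_lt_one_of_apply_ne ψ hx hx₀ fun h => hker ?_)
    rw [AddMonoidHom.mem_ker, AddChar.toAddMonoidHom_apply, ofMul_eq_zero, sub_eq_add_neg,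
      AddChar.map_add_eq_mul, h, ← AddChar.map_add_eq_mul, add_neg_cancel, AddChar.map_zero_eq_one]

end PMF

open PMF in
theorem tendsto_iterConv_apply {G : Type*} [AddCommGroup G] [Fintype G] (μ : PMF G)
    (hμ : ¬ ∃ (H : AddSubgroup G) (g : G), H ≠ ⊤ ∧ μ.support ⊆ {x | ∃ h ∈ H, x = g + h})
    (g : G) : Tendsto (fun j => iterConv μ j g) atTop (𝓝 (Fintype.card G : ℝ≥0∞)⁻¹) := by
  have hψ (ψ : AddChar G ℂ) :
      Tendsto (fun j => μ.charFun ψ ^ 2 ^ j) atTop (𝓝 (if ψ = 0 then 1 else 0)) := by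
    split_ifs with h
    · simp [h, charFun_zero]
    · exact (tendsto_pow_atTop_nhds_zero_of_norm_lt_one (μ.norm_charFun_lt_one hμ h)).comp
        (tendsto_pow_atTop_atTop_of_one_lt one_lt_two)
  have hC : Tendsto (fun j => ((iterConv μ j g).toReal : ℂ)) atTop
      (𝓝 (Fintype.card G : ℂ)⁻¹) := by
    simp_rw [toReal_apply_eq_sum_charFun, charFun_iterConv]
    convert (tendsto_finsetSum Finset.univ fun ψ _ => (hψ ψ).mul_const (ψ (-g))).const_mul _
    simp [ite_mul]
  have hR : Tendsto (fun j => (iterConv μ j g).toReal) atTop (𝓝 (Fintype.card G : ℝ)⁻¹) := by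
    simpa [Function.comp_def] using (Complex.continuous_re.tendsto _).comp hC
  rw [← ENNReal.tendsto_toReal_iff (fun j => apply_ne_top _ g)
    (ENNReal.inv_ne_top.2 (Nat.cast_ne_zero.2 Fintype.card_ne_zero))]
  simpa using hR

end Fourier

section Hamming

def funZModTwoEquivFinset {ι : Type*} [Fintype ι] [DecidableEq ι] :
    (ι → ZMod 2) ≃ Finset ι where
  toFun g := Finset.univ.filter fun i => g i = 1
  invFun s i := if i ∈ s then 1 else 0
  left_inv g := funext fun i => by
    have key : ∀ a : ZMod 2, (if a = 1 then 1 else 0) = a := by decide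
    simpa using key (g i)
  right_inv s := by ext i; simp

lemma card_filter_degree_eq (N i : ℕ) :
    (Finset.univ.filter fun g : Fin N → ZMod 2 => degree g = i).card = N.choose i :=
  calc _ = Fintype.card {g : Fin N → ZMod 2 // degree g = i} := (Fintype.card_subtype _).symm
    _ = Fintype.card {s : Finset (Fin N) // s.card = i} :=
      Fintype.card_congr (funZModTwoEquivFinset.subtypeEquiv fun _ => Iff.rfl)
    _ = N.choose i := by rw [Fintype.card_finset_len, Fintype.card_fin]

lemma sum_degree (N : ℕ) : ∑ g : Fin N → ZMod 2, degree g = N * 2 ^ (N - 1) := by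
  have hmaps (g : Fin N → ZMod 2) (_ : g ∈ Finset.univ) : degree g ∈ Finset.range (N + 1) :=
    Finset.mem_range_succ_iff.2 ((Finset.card_le_univ _).trans_eq (Fintype.card_fin N))
  rw [← Finset.sum_fiberwise_of_maps_to hmaps, ← Nat.sum_range_mul_choose]
  refine Finset.sum_congr rfl fun i _ => ?_
  rw [Finset.sum_congr rfl fun g hg => (Finset.mem_filter.1 hg).2, Finset.sum_const,
    card_filter_degree_eq, smul_eq_mul, mul_comm]

variable {N : ℕ} {ν : ℕ → PMF (Fin N → ZMod 2)}

lemma tendsto_toOuterMeasure_degree_eq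
    (h : ∀ g, Tendsto (fun j => ν j g) atTop (𝓝 (2 ^ N : ℝ≥0∞)⁻¹)) (i : ℕ) :
    Tendsto (fun j => (ν j).toOuterMeasure {g | degree g = i}) atTop
      (𝓝 ((N.choose i : ℝ≥0∞) / 2 ^ N)) := by
  have hfin : {g : Fin N → ZMod 2 | degree g = i} =
      ↑(Finset.univ.filter fun g : Fin N → ZMod 2 => degree g = i) := by
    simp
  simp_rw [hfin, PMF.toOuterMeasure_apply_finset]
  convert tendsto_finsetSum _ fun g _ => h g
  rw [Finset.sum_const, card_filter_degree_eq, nsmul_eq_mul, div_eq_mul_inv]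

lemma tendsto_expected_degree
    (h : ∀ g, Tendsto (fun j => ν j g) atTop (𝓝 (2 ^ N : ℝ≥0∞)⁻¹)) :
    Tendsto (fun j => ∑' g, ν j g * (degree g : ℝ≥0∞)) atTop (𝓝 ((N : ℝ≥0∞) / 2)) := by
  simp_rw [tsum_fintype]
  convert tendsto_finsetSum _ fun g _ =>
    ENNReal.Tendsto.mul_const (h g) (Or.inr (ENNReal.natCast_ne_top (degree g)))
  rw [← Finset.mul_sum, ← Nat.cast_sum, sum_degree]
  cases N with
  | zero => simp
  | succ n =>
    push_cast
    rw [pow_succ, ENNReal.mul_inv (by simp) (by simp), div_eq_mul_inv]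
    calc ((n : ℝ≥0∞) + 1) * 2⁻¹ = (n + 1) * 2⁻¹ * ((2 ^ n)⁻¹ * 2 ^ n) := by
          rw [ENNReal.inv_mul_cancel (by simp) (by simp), mul_one]
      _ = (2 ^ n)⁻¹ * 2⁻¹ * ((n + 1) * 2 ^ n) := by ring

end Hamming

theorem stmt_3_general (N : ℕ) (μ : PMF (Fin N → ZMod 2))
    (hnd : ¬ ∃ (H : AddSubgroup (Fin N → ZMod 2)) (g : Fin N → ZMod 2),
      H ≠ ⊤ ∧ μ.support ⊆ {x : Fin N → ZMod 2 | ∃ h ∈ H, x = g + h}) :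
    (∀ g : Fin N → ZMod 2,
      Filter.Tendsto (fun j => iterConv μ j g) Filter.atTop (nhds ((2 ^ N : ℝ≥0∞)⁻¹))) ∧
    (∀ i : ℕ, i ≤ N →
      Filter.Tendsto
        (fun j => (iterConv μ j).toOuterMeasure {g : Fin N → ZMod 2 | degree g = i})
        Filter.atTop (nhds ((N.choose i : ℝ≥0∞) / (2 ^ N : ℝ≥0∞)))) ∧
    Filter.Tendsto
      (fun j => ∑' g : Fin N → ZMod 2, iterConv μ j g * (degree g : ℝ≥0∞))
      Filter.atTop (nhds ((N : ℝ≥0∞) / 2)) := by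
  have h : ∀ g : Fin N → ZMod 2,
      Tendsto (fun j => iterConv μ j g) atTop (𝓝 (2 ^ N : ℝ≥0∞)⁻¹) := fun g => by
    simpa using tendsto_iterConv_apply μ hnd g
  exact ⟨h, fun i _ => tendsto_toOuterMeasure_degree_eq h i, tendsto_expected_degree h⟩

/-- if the support of `μ` is not contained in any coset of a proper additive
subgroup of `G = (Fin N → ZMod 2)`, then the iterated recombinations `iterConv μ j`
converge pointwise to the uniform distribution `2^{-N}`; consequently the Hamming-weight
distribution converges to the Binomial `B(N, 1/2)` and the expected Hamming weight
converges to `N/2`. -/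
theorem stmt_3 (N : ℕ) (hN : 1 ≤ N) (μ : PMF (Fin N → ZMod 2))
    (hnd : ¬ ∃ (H : AddSubgroup (Fin N → ZMod 2)) (g : Fin N → ZMod 2),
      H ≠ ⊤ ∧ μ.support ⊆ {x : Fin N → ZMod 2 | ∃ h ∈ H, x = g + h}) :
    (∀ g : Fin N → ZMod 2,
      Filter.Tendsto (fun j => iterConv μ j g) Filter.atTop (nhds ((2 ^ N : ℝ≥0∞)⁻¹))) ∧
    (∀ i : ℕ, i ≤ N →
      Filter.Tendsto
        (fun j => (iterConv μ j).toOuterMeasure {g : Fin N → ZMod 2 | degree g = i})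
        Filter.atTop (nhds ((N.choose i : ℝ≥0∞) / (2 ^ N : ℝ≥0∞)))) ∧
    Filter.Tendsto
      (fun j => ∑' g : Fin N → ZMod 2, iterConv μ j g * (degree g : ℝ≥0∞))
      Filter.atTop (nhds ((N : ℝ≥0∞) / 2)) :=
  stmt_3_general N μ hnd
end

section
/- Let N and W be natural numbers with 1 ≤ W < N, and let f be a random leading edge drawn from the distribution HD_{N,W}. Then for every index i with W ≤ i ≤ N − W − 1, the probability that i belongs to the window [f, f+W−1] (i.e. that f ≤ i ≤ f + W − 1) equals W/N. Consequently, if the encoded vector g is formed by drawing f from HD_{N,W} and then setting each coordinate inside [f, f+W−1] to 1 independently with probability 1/2 and all coordinates outside the window to 0, then for every such interior index i the probability that g i = 1 equals W/(2N). -/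
/-!
An interior index `i` (with `W ≤ i < N - W`) is covered exactly by the `W` leading edges
`f ∈ [i + 1 - W, i]`. None of them is an endpoint `0` or `N - W`, so each carries mass `1 / N`,
giving `W / N`; the coordinate is then `1` with conditional probability `1 / 2`.
-/

/-- The leading-edge distribution `HD_{N,W}` of Band Codes: probability `(W+1)/(2N)` for
`f ∈ {0, N−W}` and `1/N` for `0 < f < N−W`. -/
def HD (N W f : ℕ) : ℚ :=
  if f = 0 ∨ f = N - W then (W + 1 : ℚ) / (2 * N) else 1 / N

open Finset

theorem HD_of_pos_of_lt {N W f : ℕ} (hf0 : 0 < f) (hf : f < N - W) : HD N W f = 1 / N := by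
  rw [HD, if_neg (by omega)]

theorem filter_window_eq_Icc {N W i : ℕ} (hW : 1 ≤ W) (hi : i ≤ N - W) :
    (range (N - W + 1)).filter (fun f => f ≤ i ∧ i ≤ f + W - 1) = Icc (i + 1 - W) i := by
  ext f
  simp only [mem_filter, mem_range, mem_Icc]
  omega

theorem sum_HD_window_of_interior {N W i : ℕ} (hW : 1 ≤ W) (hWi : W ≤ i) (hi : i < N - W) :
    ∑ f ∈ (range (N - W + 1)).filter (fun f => f ≤ i ∧ i ≤ f + W - 1), HD N W f
      = (W : ℚ) / N := by
  rw [filter_window_eq_Icc hW hi.le,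
    sum_congr rfl fun f hf => HD_of_pos_of_lt (by grind) (by grind),
    sum_const, Nat.card_Icc, show i + 1 - (i + 1 - W) = W by omega, nsmul_eq_mul, mul_one_div]

theorem stmt_10_general (N W : ℕ) (hW1 : 1 ≤ W)
    (i : ℕ) (hi1 : W ≤ i) (hi2 : i ≤ N - W - 1) :
    (∑ f ∈ (Finset.range (N - W + 1)).filter (fun f => f ≤ i ∧ i ≤ f + W - 1), HD N W f)
      = (W : ℚ) / N ∧
    (∑ f ∈ (Finset.range (N - W + 1)).filter (fun f => f ≤ i ∧ i ≤ f + W - 1),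
        HD N W f * (1 / 2 : ℚ))
      = (W : ℚ) / (2 * N) := by
  have hcover := sum_HD_window_of_interior (N := N) hW1 hi1 (by omega)
  refine ⟨hcover, ?_⟩
  rw [← sum_mul, hcover, div_mul_div_comm, mul_one, mul_comm]

/-- for an interior index `W ≤ i ≤ N − W − 1`, the probability (under a
leading edge `f` drawn from `HD_{N,W}`) that `i` lies in the window `[f, f+W−1]` equals
`W/N`; consequently, if each coordinate inside the window is then set to `1`
independently with probability `1/2` (and to `0` outside), the probability that the
`i`-th coordinate of the encoded vector equals `1` is `W/(2N)`. -/
theorem stmt_10 (N W : ℕ) (hW1 : 1 ≤ W) (hWN : W < N)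
    (i : ℕ) (hi1 : W ≤ i) (hi2 : i ≤ N - W - 1) :
    (∑ f ∈ (Finset.range (N - W + 1)).filter (fun f => f ≤ i ∧ i ≤ f + W - 1), HD N W f)
      = (W : ℚ) / N ∧
    (∑ f ∈ (Finset.range (N - W + 1)).filter (fun f => f ≤ i ∧ i ≤ f + W - 1),
        HD N W f * (1 / 2 : ℚ))
      = (W : ℚ) / (2 * N) :=
  stmt_10_general N W hW1 i hi1 hi2
end

section
/- Let N and W be natural numbers with 1 ≤ W ≤ N, and let V be a linear subspace of (Fin N → ZMod 2) over ZMod 2 that is spanned by a set of vectors each of which is supported in some interval of length W (i.e. for each spanning vector v there exists f with support(v) ⊆ [f, f+W−1]). Then V admits a basis consisting of nonzero vectors with pairwise distinct leading indices such that every basis vector b is supported in the interval [s_b, s_b + W − 1], where s_b is the leading index of b. Equivalently, the matrix G produced by the Swap Gaussian Elimination triangularization from received band packets BP(N, W) is an upper triangular band matrix with G_{i,j} = 0 whenever j < i or j > i + W − 1, and each nonzero row of G is itself (the encoding vector of) a band packet of window size W. -/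
namespace Stmt12

lemma zmod2_em (x : ZMod 2) : x = 0 ∨ x = 1 := by revert x; decide

lemma zmod2_add_self (x : ZMod 2) : x + x = 0 := by revert x; decide

variable {N : ℕ}

lemma vec_add_self (w : Fin N → ZMod 2) : w + w = 0 :=
  funext fun i => zmod2_add_self (w i)

def supp (v : Fin N → ZMod 2) : Finset (Fin N) :=
  Finset.univ.filter (fun i => v i = 1)

lemma mem_supp {v : Fin N → ZMod 2} {i : Fin N} : i ∈ supp v ↔ v i = 1 := by
  simp [supp]

lemma supp_nonempty {v : Fin N → ZMod 2} (hv : v ≠ 0) : (supp v).Nonempty := by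
  obtain ⟨i, hi⟩ := Function.ne_iff.mp hv
  exact ⟨i, mem_supp.mpr ((zmod2_em (v i)).resolve_left hi)⟩

def lead [NeZero N] (v : Fin N → ZMod 2) : Fin N :=
  if h : (supp v).Nonempty then (supp v).min' h else 0

lemma lead_spec [NeZero N] {v : Fin N → ZMod 2} (hv : v ≠ 0) :
    v (lead v) = 1 ∧ ∀ i, v i = 1 → lead v ≤ i := by
  have h := supp_nonempty hv
  unfold lead
  rw [dif_pos h]
  exact ⟨mem_supp.mp (Finset.min'_mem _ h),
    fun i hi => Finset.min'_le _ _ (mem_supp.mpr hi)⟩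

/-- banded: support lies in `[lead v, lead v + W - 1]`. -/
def Band [NeZero N] (W : ℕ) (v : Fin N → ZMod 2) : Prop :=
  ∀ i : Fin N, v i = 1 → (i : ℕ) ≤ (lead v : ℕ) + W - 1

lemma add_stuff [NeZero N] {W : ℕ} {v b : Fin N → ZMod 2}
    (hv0 : v ≠ 0) (hb0 : b ≠ 0) (hvB : Band W v) (hbB : Band W b)
    (hl : lead v = lead b) (hw : v + b ≠ 0) :
    (lead v : ℕ) < (lead (v + b) : ℕ) ∧ Band W (v + b) := by
  obtain ⟨hv1, hvle⟩ := lead_spec hv0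
  obtain ⟨hb1, hble⟩ := lead_spec hb0
  obtain ⟨hw1, hwle⟩ := lead_spec hw
  have hmem : ∀ i, (v + b) i = 1 → v i = 1 ∨ b i = 1 := by
    intro i hi
    rcases zmod2_em (v i) with h1 | h1
    · rcases zmod2_em (b i) with h2 | h2
      · exfalso
        have : (v + b) i = 0 := by simp [Pi.add_apply, h1, h2]
        rw [this] at hi; exact absurd hi (by decide)
      · exact Or.inr h2
    · exact Or.inl h1
  have hlv_le : ∀ i, (v + b) i = 1 → lead v ≤ i := by
    intro i hi
    rcases hmem i hi with h | h
    · exact hvle i h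
    · rw [hl]; exact hble i h
  have hzero : (v + b) (lead v) = 0 := by
    have : (v + b) (lead v) = v (lead v) + b (lead v) := rfl
    rw [this, hv1, hl, hb1]; decide
  have hlt : lead v < lead (v + b) := by
    refine lt_of_le_of_ne (hlv_le _ hw1) ?_
    intro h
    rw [← h, hzero] at hw1
    exact absurd hw1 (by decide)
  have hltn : (lead v : ℕ) < (lead (v + b) : ℕ) := hlt
  refine ⟨hltn, ?_⟩
  intro i hi
  rcases hmem i hi with h | h
  · have := hvB i h; omega
  · have := hbB i h
    have hlb : (lead b : ℕ) = (lead v : ℕ) := by rw [hl]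
    omega

def Inv [NeZero N] (W : ℕ) (B : Finset (Fin N → ZMod 2)) : Prop :=
  (∀ b ∈ B, b ≠ 0 ∧ Band W b) ∧
  ∀ b1 ∈ B, ∀ b2 ∈ B, b1 ≠ b2 → lead b1 ≠ lead b2

lemma span_insert_add {v b : Fin N → ZMod 2} (B : Set (Fin N → ZMod 2)) (hb : b ∈ B) :
    Submodule.span (ZMod 2) (insert v B) = Submodule.span (ZMod 2) (insert (v + b) B) := by
  have hvb : (v + b) + b = v := by
    rw [add_assoc, vec_add_self, add_zero]
  apply le_antisymm
  · rw [Submodule.span_le]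
    intro x hx
    rcases hx with h | hx
    · have h1 : (v + b) + b ∈ Submodule.span (ZMod 2) (insert (v + b) B) :=
        add_mem (Submodule.subset_span (Set.mem_insert _ _))
          (Submodule.subset_span (Set.mem_insert_of_mem _ hb))
      rw [hvb] at h1
      rw [h]; exact h1
    · exact Submodule.subset_span (Set.mem_insert_of_mem _ hx)
  · rw [Submodule.span_le]
    intro x hx
    rcases hx with h | hx
    · rw [h]
      exact add_mem (Submodule.subset_span (Set.mem_insert _ _))
        (Submodule.subset_span (Set.mem_insert_of_mem _ hb))
    · exact Submodule.subset_span (Set.mem_insert_of_mem _ hx)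

lemma step [NeZero N] (W : ℕ) : ∀ n : ℕ, ∀ v : Fin N → ZMod 2,
    N - (lead v : ℕ) ≤ n → Band W v →
    ∀ B : Finset (Fin N → ZMod 2), Inv W B →
    ∃ B' : Finset (Fin N → ZMod 2), Inv W B' ∧
      Submodule.span (ZMod 2) (insert v (B : Set (Fin N → ZMod 2))) =
        Submodule.span (ZMod 2) (B' : Set (Fin N → ZMod 2)) := by
  intro n
  induction n with
  | zero =>
    intro v hn
    have : (lead v : ℕ) < N := (lead v).isLt
    omega
  | succ n ih =>
    intro v hn hv B hB
    by_cases h0 : v = 0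
    · exact ⟨B, hB, by rw [h0, Submodule.span_insert_zero]⟩
    by_cases hex : ∃ b ∈ B, lead b = lead v
    · obtain ⟨b, hbB, hlb⟩ := hex
      have hb0 : b ≠ 0 := (hB.1 b hbB).1
      have hbBand : Band W b := (hB.1 b hbB).2
      by_cases hw : v + b = 0
      · have hveq : v = b := by
          have : v + b + b = b := by rw [hw, zero_add]
          rw [add_assoc, vec_add_self, add_zero] at this
          exact this
        refine ⟨B, hB, ?_⟩
        exact Submodule.span_insert_eq_span
          (Submodule.subset_span (by rw [hveq]; exact hbB))
      · obtain ⟨hlt, hwBand⟩ := add_stuff h0 hb0 hv hbBand hlb.symm hw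
        have hn' : N - (lead (v + b) : ℕ) ≤ n := by
          have : (lead (v + b) : ℕ) < N := (lead (v + b)).isLt
          omega
        obtain ⟨B', hB', hspan⟩ := ih (v + b) hn' hwBand B hB
        refine ⟨B', hB', ?_⟩
        rw [← hspan]
        exact span_insert_add _ hbB
    · push_neg at hex
      refine ⟨insert v B, ?_, by rw [Finset.coe_insert]⟩
      constructor
      · intro b hb
        rcases Finset.mem_insert.mp hb with rfl | hb
        · exact ⟨h0, hv⟩
        · exact hB.1 b hb
      · intro b1 hb1 b2 hb2 hne
        rcases Finset.mem_insert.mp hb1 with h1 | h1 <;>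
          rcases Finset.mem_insert.mp hb2 with h2 | h2
        · exact absurd (h1.trans h2.symm) hne
        · subst h1; exact fun h => hex b2 h2 h.symm
        · subst h2; exact fun h => hex b1 h1 h
        · exact hB.2 b1 h1 b2 h2 hne

lemma li_of_leads [NeZero N] (B : Finset (Fin N → ZMod 2))
    (h0 : ∀ b ∈ B, b ≠ 0)
    (hd : ∀ b1 ∈ B, ∀ b2 ∈ B, b1 ≠ b2 → lead b1 ≠ lead b2) :
    LinearIndependent (ZMod 2)
      (fun b : (B : Set (Fin N → ZMod 2)) => (b : Fin N → ZMod 2)) := by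
  rw [Fintype.linearIndependent_iff]
  intro g hg
  by_contra hc
  push_neg at hc
  obtain ⟨i0, hi0⟩ := hc
  set T : Finset (B : Set (Fin N → ZMod 2)) :=
    Finset.univ.filter (fun i => g i ≠ 0) with hT
  have hTne : T.Nonempty := ⟨i0, by simp [hT, hi0]⟩
  obtain ⟨j0, hj0T, hj0min⟩ :=
    Finset.exists_min_image T (fun j => (lead (j : Fin N → ZMod 2) : ℕ)) hTne
  have hgj0 : g j0 ≠ 0 := by
    have := hj0T; simp [hT] at this; exact this
  have hj0B : (j0 : Fin N → ZMod 2) ∈ B := j0.2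
  have hj00 : (j0 : Fin N → ZMod 2) ≠ 0 := h0 _ hj0B
  obtain ⟨hj01, hj0le⟩ := lead_spec hj00
  have heval := congrFun hg (lead (j0 : Fin N → ZMod 2))
  rw [Finset.sum_apply] at heval
  rw [Finset.sum_eq_single j0] at heval
  · rw [Pi.smul_apply, hj01, smul_eq_mul, mul_one] at heval
    exact hgj0 heval
  · intro i _ hij
    rw [Pi.smul_apply, smul_eq_mul]
    rcases zmod2_em (g i) with hgi | hgi
    · rw [hgi, zero_mul]
    · have hiB : (i : Fin N → ZMod 2) ∈ B := i.2
      have hi0' : (i : Fin N → ZMod 2) ≠ 0 := h0 _ hiB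
      obtain ⟨hi1, hile⟩ := lead_spec hi0'
      rcases zmod2_em ((i : Fin N → ZMod 2) (lead (j0 : Fin N → ZMod 2))) with hz | hz
      · rw [hz, mul_zero]
      · exfalso
        have hle1 : lead (i : Fin N → ZMod 2) ≤ lead (j0 : Fin N → ZMod 2) := hile _ hz
        have hiT : i ∈ T := by simp [hT, hgi]
        have hle2 : (lead (j0 : Fin N → ZMod 2) : ℕ) ≤ (lead (i : Fin N → ZMod 2) : ℕ) :=
          hj0min i hiT
        have heq : lead (i : Fin N → ZMod 2) = lead (j0 : Fin N → ZMod 2) := by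
          apply Fin.ext
          omega
        have hne : (i : Fin N → ZMod 2) ≠ (j0 : Fin N → ZMod 2) := by
          intro h; exact hij (Subtype.ext h)
        exact hd _ hiB _ hj0B hne heq
  · intro h
    exact absurd (Finset.mem_univ j0) h

end Stmt12

/-- a subspace `V` of `(Fin N → ZMod 2)` spanned by vectors each supported
in some interval of length `W` admits a basis of nonzero vectors with pairwise distinct
leading indices, each basis vector being supported in the interval of length `W`
starting at its own leading index — i.e. the matrix produced by SGE triangularization
from band packets `BP(N, W)` is an upper triangular band matrix of band width `W` whose
nonzero rows are band packets. -/
theorem stmt_12 (N W : ℕ) (hW1 : 1 ≤ W) (hWN : W ≤ N)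
    (V : Submodule (ZMod 2) (Fin N → ZMod 2))
    (S : Set (Fin N → ZMod 2)) (hspan : Submodule.span (ZMod 2) S = V)
    (hband : ∀ v ∈ S, ∃ f : ℕ, ∀ i : Fin N, v i = 1 → f ≤ (i : ℕ) ∧ (i : ℕ) ≤ f + W - 1) :
    ∃ (B : Finset (Fin N → ZMod 2)) (lead : (Fin N → ZMod 2) → Fin N),
      LinearIndependent (ZMod 2) (fun b : (B : Set (Fin N → ZMod 2)) => (b : Fin N → ZMod 2)) ∧
      Submodule.span (ZMod 2) (B : Set (Fin N → ZMod 2)) = V ∧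
      (∀ b ∈ B, b (lead b) = 1 ∧ ∀ i : Fin N, b i = 1 → lead b ≤ i) ∧
      (∀ b ∈ B, ∀ i : Fin N, b i = 1 →
        ((lead b : ℕ) ≤ (i : ℕ) ∧ (i : ℕ) ≤ (lead b : ℕ) + W - 1)) ∧
      (∀ b1 ∈ B, ∀ b2 ∈ B, b1 ≠ b2 → lead b1 ≠ lead b2) := by
  haveI : NeZero N := ⟨by omega⟩
  -- every element of S is banded w.r.t. its own lead
  have hSband : ∀ v ∈ S, Stmt12.Band W v := by
    intro v hv i hi
    obtain ⟨f, hf⟩ := hband v hv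
    have hv0 : v ≠ 0 := by
      intro h; rw [h] at hi; exact absurd hi (by simp)
    obtain ⟨h1, _⟩ := Stmt12.lead_spec hv0
    have hfl := hf _ h1
    have hfi := hf i hi
    omega
  -- fold over a finite spanning subset
  have key : ∀ T : Finset (Fin N → ZMod 2), (↑T : Set (Fin N → ZMod 2)) ⊆ S →
      ∃ B : Finset (Fin N → ZMod 2), Stmt12.Inv W B ∧
        Submodule.span (ZMod 2) (T : Set (Fin N → ZMod 2)) =
          Submodule.span (ZMod 2) (B : Set (Fin N → ZMod 2)) := by
    intro T
    induction T using Finset.induction_on with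
    | empty =>
      intro _
      exact ⟨∅, ⟨fun b hb => absurd hb (by simp), fun b1 hb1 => absurd hb1 (by simp)⟩, rfl⟩
    | @insert a T' ha ih =>
      intro hsub
      have haS : a ∈ S := hsub (by simp)
      have hT'sub : (↑T' : Set (Fin N → ZMod 2)) ⊆ S := by
        intro x hx; exact hsub (by simp [hx])
      obtain ⟨B, hB, hspanB⟩ := ih hT'sub
      obtain ⟨B', hB', hspanB'⟩ :=
        Stmt12.step W N a (by omega) (hSband a haS) B hB
      refine ⟨B', hB', ?_⟩
      rw [Finset.coe_insert, ← hspanB']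
      rw [Submodule.span_insert, Submodule.span_insert, hspanB]
  have hSfin : S.Finite := Set.toFinite S
  obtain ⟨B, hInv, hspanB⟩ := key hSfin.toFinset (by simp)
  rw [hSfin.coe_toFinset, hspan] at hspanB
  refine ⟨B, Stmt12.lead, ?_, hspanB.symm, ?_, ?_, hInv.2⟩
  · exact Stmt12.li_of_leads B (fun b hb => (hInv.1 b hb).1) hInv.2
  · intro b hb
    exact Stmt12.lead_spec (hInv.1 b hb).1
  · intro b hb i hi
    obtain ⟨_, hle⟩ := Stmt12.lead_spec (hInv.1 b hb).1
    exact ⟨hle i hi, (hInv.1 b hb).2 i hi⟩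
end
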